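/- arXiv:2308.04031 — 2 statements merged into one kernel-verified Lean document; each statement's English description precedes it below -/
import Mathlib

section
/- For all positive integers a₁, a₂, a₃ with 1/a₁+1/a₂+1/a₃ > 1, the rational number (a₁+a₂+a₃-1)!·a₁^{a₁}·a₂^{a₂}·a₃^{a₃}/(a₁!·a₂!·a₃!·(1/a₁+1/a₂+1/a₃-1)) is a positive integer. -/
/-!
Clearing denominators, `χ > 0` says `a₁a₂a₃ < a₂a₃ + a₁a₃ + a₁a₂`, which for a sorted triple
leaves only `(1, p, q)`, `(2, 2, r)`, `(2, 3, 3)`, `(2, 3, 4)` and `(2, 3, 5)`.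
For `(1, p, q)` the number is `C(p+q-1, p) p^(p+1) q^q`, for `(2, 2, r)` it is
`4 (r+1)(r+2)(r+3) r^(r+1)`, and the three exceptional values are computed directly.
The expression is symmetric in `a₁, a₂, a₃`, so sorted triples suffice.
-/

open Nat

def eulerChar (a b c : ℕ) : ℚ := 1 / (a : ℚ) + 1 / (b : ℚ) + 1 / (c : ℚ) - 1

def degLL (a b c : ℕ) : ℚ :=
  ((a + b + c - 1)! * (a : ℚ) ^ a * (b : ℚ) ^ b * (c : ℚ) ^ c) /
    ((a)! * (b)! * (c)! * eulerChar a b c)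

lemma eulerChar_comm12 (a b c : ℕ) : eulerChar b a c = eulerChar a b c := by
  unfold eulerChar; ring

lemma eulerChar_comm23 (a b c : ℕ) : eulerChar a c b = eulerChar a b c := by
  unfold eulerChar; ring

lemma degLL_comm12 (a b c : ℕ) : degLL b a c = degLL a b c := by
  unfold degLL; rw [eulerChar_comm12, add_comm b a]; ring

lemma degLL_comm23 (a b c : ℕ) : degLL a c b = degLL a b c := by
  unfold degLL; rw [eulerChar_comm23, add_right_comm a c b]; ring

theorem forall_of_forall_sorted {α : Type*} [LinearOrder α] {P : α → α → α → Prop}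
    (swap12 : ∀ a b c, P a b c → P b a c) (swap23 : ∀ a b c, P a b c → P a c b)
    (sorted : ∀ a b c, a ≤ b → b ≤ c → P a b c) (a b c : α) : P a b c := by
  have of_le : ∀ a b c, a ≤ b → P a b c := by
    intro a b c hab
    rcases le_total b c with hbc | hcb
    · exact sorted a b c hab hbc
    rcases le_total a c with hac | hca
    · exact swap23 _ _ _ (sorted a c b hac hcb)
    · exact swap23 _ _ _ (swap12 _ _ _ (sorted c a b hca hab))
  rcases le_total a b with hab | hba
  · exact of_le a b c hab
  · exact swap12 _ _ _ (of_le b a c hba)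

lemma mul_mul_lt_of_eulerChar_pos {a b c : ℕ} (ha : 0 < a) (hb : 0 < b) (hc : 0 < c)
    (hχ : 0 < eulerChar a b c) : a * b * c < b * c + a * c + a * b := by
  unfold eulerChar at hχ
  have : (a * b * c : ℚ) < b * c + a * c + a * b := by
    field_simp at hχ
    linarith
  exact_mod_cast this

lemma sorted_cases_of_mul_mul_lt {a b c : ℕ} (hab : a ≤ b) (hbc : b ≤ c)
    (h : a * b * c < b * c + a * c + a * b) :
    a ≤ 1 ∨ (a = 2 ∧ b = 2) ∨ (a = 2 ∧ b = 3 ∧ (c = 3 ∨ c = 4 ∨ c = 5)) := by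
  have ha3 : a < 3 := by
    have : a * (b * c) < 3 * (b * c) := by
      nlinarith [Nat.mul_le_mul_right c hab, Nat.mul_le_mul_left a hbc]
    exact Nat.lt_of_mul_lt_mul_right this
  interval_cases a
  · exact Or.inl zero_le_one
  · exact Or.inl le_rfl
  have hb4 : b < 4 := by
    have : b * c < 4 * c := by nlinarith
    exact Nat.lt_of_mul_lt_mul_right this
  interval_cases b
  · exact Or.inr (Or.inl ⟨rfl, rfl⟩)
  · exact Or.inr (Or.inr ⟨rfl, rfl, by omega⟩)

lemma degLL_one_left {p q : ℕ} (hp : 0 < p) (hq : 0 < q) :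
    degLL 1 p q = ((p + q - 1).choose p * p ^ (p + 1) * q ^ q : ℕ) := by
  obtain ⟨q, rfl⟩ : ∃ q', q = q' + 1 := ⟨q - 1, by omega⟩
  have hχ : eulerChar 1 p (q + 1) = (p + q + 1) / (p * (q + 1)) := by
    unfold eulerChar
    push_cast
    field_simp
    ring
  unfold degLL
  rw [hχ, show 1 + p + (q + 1) - 1 = p + q + 1 by omega, show p + (q + 1) - 1 = p + q by omega]
  push_cast
  rw [Nat.cast_choose ℚ (le_add_right p q), Nat.add_sub_cancel_left, factorial_succ,
    factorial_succ q]
  push_cast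
  field_simp
  ring

lemma degLL_two_two {r : ℕ} (hr : 0 < r) :
    degLL 2 2 r = (4 * (r + 1) * (r + 2) * (r + 3) * r ^ (r + 1) : ℕ) := by
  unfold degLL eulerChar
  rw [show 2 + 2 + r - 1 = r + 3 by omega]
  simp only [factorial_succ]
  push_cast
  field_simp
  ring

lemma exists_pos_eq_degLL_of_sorted {a b c : ℕ} (ha : 0 < a) (hab : a ≤ b) (hbc : b ≤ c)
    (hχ : 0 < eulerChar a b c) : ∃ n : ℕ, 0 < n ∧ degLL a b c = n := by
  have hb : 0 < b := ha.trans_le hab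
  have hc : 0 < c := hb.trans_le hbc
  rcases sorted_cases_of_mul_mul_lt hab hbc (mul_mul_lt_of_eulerChar_pos ha hb hc hχ) with
    ha1 | ⟨rfl, rfl⟩ | ⟨rfl, rfl, rfl | rfl | rfl⟩
  · obtain rfl : a = 1 := by omega
    exact ⟨_, by have := Nat.choose_pos (by omega : b ≤ b + c - 1); positivity,
      degLL_one_left hb hc⟩
  · exact ⟨_, by positivity, degLL_two_two hc⟩
  · exact ⟨1224720, by norm_num, by norm_num [degLL, eulerChar, factorial]⟩
  · exact ⟨46448640, by norm_num, by norm_num [degLL, eulerChar, factorial]⟩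
  · exact ⟨2551500000, by norm_num, by norm_num [degLL, eulerChar, factorial]⟩

theorem degLL_is_positive_integer (a₁ a₂ a₃ : ℕ) (h₁ : 0 < a₁) (h₂ : 0 < a₂) (h₃ : 0 < a₃)
    (hχ : 1 / (a₁ : ℚ) + 1 / (a₂ : ℚ) + 1 / (a₃ : ℚ) > 1) :
    ∃ n : ℕ, 0 < n ∧
      (((a₁ + a₂ + a₃ - 1)! : ℚ) * (a₁ : ℚ) ^ a₁ * (a₂ : ℚ) ^ a₂ * (a₃ : ℚ) ^ a₃) /
          (((a₁)! : ℚ) * (a₂)! * (a₃)! *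
            (1 / (a₁ : ℚ) + 1 / (a₂ : ℚ) + 1 / (a₃ : ℚ) - 1)) = n := by
  change ∃ n : ℕ, 0 < n ∧ degLL a₁ a₂ a₃ = n
  refine forall_of_forall_sorted
    (P := fun a b c ↦ 0 < a → 0 < b → 0 < c → 0 < eulerChar a b c →
      ∃ n : ℕ, 0 < n ∧ degLL a b c = n) ?_ ?_ ?_ a₁ a₂ a₃ h₁ h₂ h₃ (sub_pos.mpr hχ)
  · intro a b c h hb ha hc hχ
    rw [degLL_comm12]
    exact h ha hb hc (by rwa [eulerChar_comm12] at hχ)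
  · intro a b c h ha hc hb hχ
    rw [degLL_comm23]
    exact h ha hb hc (by rwa [eulerChar_comm23] at hχ)
  · intro a b c hab hbc ha _ _ hχ
    exact exists_pos_eq_degLL_of_sorted ha hab hbc hχ
end

section
/- Deligne's recursion for type A: (μ+1)^{μ-1} = ((μ+1)/2)·Σ_{v=1}^{μ} e(A_{v-1})·binom(μ-1, v-1)·e(A_{μ-v}), where e(A_k) = (k+1)^{k-1} and e(A_0) = 1; equivalently (μ+1)^{μ-1} = ((μ+1)/2)·Σ_{v=1}^{μ} binom(μ-1, v-1)·v^{v-2}·(μ-v+1)^{μ-v-1}. -/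
open Nat Finset Polynomial

lemma hsgn (m k : ℕ) (h : k ≤ m) : (-1:ℚ)^(m-k) = (-1)^m * (-1)^k := by
  have h1 : (-1:ℚ)^(m-k) * (-1)^k = (-1)^m := by rw [← pow_add, Nat.sub_add_cancel h]
  have h2 : (-1:ℚ)^k * (-1)^k = 1 := by rw [← pow_add, ← two_mul, pow_mul]; norm_num
  calc (-1:ℚ)^(m-k) = (-1)^(m-k) * ((-1)^k * (-1)^k) := by rw [h2, mul_one]
    _ = (-1)^m * (-1)^k := by rw [← mul_assoc, h1]

lemma alt_choose (n : ℕ) (hn : n ≠ 0) :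
    ∑ k ∈ Finset.range (n+1), (-1:ℚ)^(n-k) * (n.choose k) = 0 := by
  have h := Int.alternating_sum_range_choose_of_ne hn
  have h' : ∑ i ∈ Finset.range (n+1), ((-1:ℚ)^i * (n.choose i)) = 0 := by
    exact_mod_cast congrArg (fun z : ℤ => (z : ℚ)) h
  calc ∑ k ∈ Finset.range (n+1), (-1:ℚ)^(n-k) * (n.choose k)
      = ∑ k ∈ Finset.range (n+1), (-1:ℚ)^n * ((-1)^k * (n.choose k)) := by
        refine Finset.sum_congr rfl fun k hk => ?_
        rw [hsgn n k (Nat.lt_succ_iff.mp (Finset.mem_range.mp hk))]; ring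
    _ = (-1:ℚ)^n * ∑ k ∈ Finset.range (n+1), ((-1:ℚ)^k * (n.choose k)) := by
        rw [Finset.mul_sum]
    _ = 0 := by rw [h']; ring

lemma findiff : ∀ n : ℕ, ∀ p : ℚ[X], p.natDegree < n →
    ∑ k ∈ Finset.range (n+1), (-1:ℚ)^(n-k) * (n.choose k) * p.eval (k:ℚ) = 0 := by
  intro n
  induction n with
  | zero => intro p hp; exact absurd hp (Nat.not_lt_zero _)
  | succ n ih =>
    intro p hp
    by_cases hd : p.natDegree = 0
    · obtain ⟨c, rfl⟩ := Polynomial.natDegree_eq_zero.mp hd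
      have : ∑ k ∈ Finset.range (n+1+1), (-1:ℚ)^(n+1-k) * ((n+1).choose k) * (Polynomial.C c).eval (k:ℚ)
          = (∑ k ∈ Finset.range (n+1+1), (-1:ℚ)^(n+1-k) * ((n+1).choose k)) * c := by
        rw [Finset.sum_mul]
        refine Finset.sum_congr rfl fun k hk => ?_
        rw [Polynomial.eval_C]
      rw [this, alt_choose (n+1) (Nat.succ_ne_zero n), zero_mul]
    · -- p has positive degree
      set q : ℚ[X] := p.comp (X + Polynomial.C 1) - p with hqdef
      have hp0 : p ≠ 0 := fun h => hd (by rw [h, Polynomial.natDegree_zero])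
      have hnc : (p.comp (X + Polynomial.C 1)).natDegree = p.natDegree := by
        rw [Polynomial.natDegree_comp, Polynomial.natDegree_X_add_C, mul_one]
      have hlc : (p.comp (X + Polynomial.C 1)).leadingCoeff = p.leadingCoeff := by
        rw [Polynomial.leadingCoeff_comp (by rw [Polynomial.natDegree_X_add_C]; exact one_ne_zero)]
        rw [Polynomial.leadingCoeff_X_add_C, one_pow, mul_one]
      have hc0 : p.comp (X + Polynomial.C 1) ≠ 0 := by
        intro h
        apply hp0
        have := Polynomial.leadingCoeff_eq_zero.mpr h
        rw [hlc] at this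
        exact Polynomial.leadingCoeff_eq_zero.mp this
      have hdeg : q.natDegree < p.natDegree := by
        have hdlt : q.degree < (p.comp (X + Polynomial.C 1)).degree := by
          apply Polynomial.degree_sub_lt
          · rw [Polynomial.degree_eq_natDegree hc0, Polynomial.degree_eq_natDegree hp0, hnc]
          · exact hc0
          · exact hlc
        rcases eq_or_ne q 0 with h0 | h0
        · rw [h0, Polynomial.natDegree_zero]; exact Nat.pos_of_ne_zero hd
        · have := Polynomial.natDegree_lt_natDegree h0 hdlt
          rwa [hnc] at this
      have hqev : ∀ k : ℕ, q.eval (k:ℚ) = p.eval ((k:ℚ)+1) - p.eval (k:ℚ) := by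
        intro k
        rw [hqdef, Polynomial.eval_sub, Polynomial.eval_comp, Polynomial.eval_add,
          Polynomial.eval_X, Polynomial.eval_C]
      have key : ∑ k ∈ Finset.range (n+1+1), (-1:ℚ)^(n+1-k) * ((n+1).choose k) * p.eval (k:ℚ)
          = ∑ k ∈ Finset.range (n+1), (-1:ℚ)^(n-k) * (n.choose k) * q.eval (k:ℚ) := by
        rw [Finset.sum_range_succ' _ (n+1)]
        have e1 : ∀ k, k ∈ Finset.range (n+1) →
            (-1:ℚ)^(n+1-(k+1)) * ((n+1).choose (k+1)) * p.eval ((k+1:ℕ):ℚ)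
            = (-1:ℚ)^(n-k) * (n.choose k) * p.eval ((k:ℚ)+1)
              + (-1:ℚ)^(n-k) * (n.choose (k+1)) * p.eval ((k:ℚ)+1) := by
          intro k hk
          rw [Nat.succ_sub_succ, Nat.choose_succ_succ]
          push_cast
          ring
        rw [Finset.sum_congr rfl e1, Finset.sum_add_distrib]
        have e2 : ∑ k ∈ Finset.range (n+1), (-1:ℚ)^(n-k) * (n.choose (k+1)) * p.eval ((k:ℚ)+1)
              + (-1:ℚ)^(n+1-0) * ((n+1).choose 0) * p.eval ((0:ℕ):ℚ)
            = - ∑ k ∈ Finset.range (n+1), (-1:ℚ)^(n-k) * (n.choose k) * p.eval (k:ℚ) := by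
          rw [Finset.sum_range_succ' (fun k => (-1:ℚ)^(n-k) * (n.choose k) * p.eval (k:ℚ)) n]
          rw [Finset.sum_range_succ]
          have e3 : ∀ k, k ∈ Finset.range n →
              (-1:ℚ)^(n-k) * (n.choose (k+1)) * p.eval ((k:ℚ)+1)
              = -((-1:ℚ)^(n-(k+1)) * (n.choose (k+1)) * p.eval ((k+1:ℕ):ℚ)) := by
            intro k hk
            have hkn : k < n := Finset.mem_range.mp hk
            have : n - k = (n - (k+1)) + 1 := by omega
            rw [this]
            push_cast
            ring
          rw [Finset.sum_congr rfl e3]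
          simp [Nat.choose_self, Nat.choose_zero_right]
          ring
        rw [add_assoc, e2]
        have e4 : ∀ k, k ∈ Finset.range (n+1) →
            (-1:ℚ)^(n-k) * (n.choose k) * q.eval (k:ℚ)
            = (-1:ℚ)^(n-k) * (n.choose k) * p.eval ((k:ℚ)+1)
              - (-1:ℚ)^(n-k) * (n.choose k) * p.eval (k:ℚ) := by
          intro k hk
          rw [hqev k]; ring
        rw [Finset.sum_congr rfl e4, Finset.sum_sub_distrib]
        ring
      rw [key]
      exact ih q (lt_of_lt_of_le hdeg (Nat.lt_succ_iff.mp hp))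

noncomputable def aQ (k : ℕ) : ℚ := ((k+1)^(k-1) : ℕ)

lemma aQ_mul_pow (n k : ℕ) (hk : k ≤ n + 1) : aQ k * ((k:ℚ)+1)^(n+1-k) = ((k:ℚ)+1)^n := by
  rcases Nat.eq_zero_or_pos k with rfl | hk1
  · simp [aQ]
  · have h1 : aQ k = ((k:ℚ)+1)^(k-1) := by
      rw [aQ]
      push_cast [Nat.cast_pow]
      ring_nf
    rw [h1, ← pow_add]
    congr 1
    omega

lemma poly_ext {p q : ℚ[X]} (t : ℚ) (h1 : Polynomial.derivative p = Polynomial.derivative q)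
    (h2 : p.eval t = q.eval t) : p = q := by
  have h : Polynomial.derivative (p - q) = 0 := by rw [Polynomial.derivative_sub, h1, sub_self]
  have hC := Polynomial.eq_C_of_derivative_eq_zero h
  have ht := congrArg (Polynomial.eval t) hC
  rw [Polynomial.eval_sub, h2, sub_self, Polynomial.eval_C] at ht
  have h0 : p - q = 0 := by rw [hC, ← ht, map_zero]
  exact sub_eq_zero.mp h0

lemma abel_key : ∀ n : ℕ, ∀ c : ℚ,
    ∑ k ∈ Finset.range (n+1),
        Polynomial.C ((n.choose k : ℚ) * aQ k) * (X + Polynomial.C (c + ((n-k : ℕ) : ℚ)))^(n-k)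
      = (X + Polynomial.C (c + ((n+1 : ℕ) : ℚ)))^n := by
  intro n
  induction n with
  | zero => intro c; simp [aQ]
  | succ n ih =>
    intro c
    apply poly_ext (-(c + (n+2)))
    · -- derivatives agree
      rw [Polynomial.derivative_sum, Polynomial.derivative_X_add_C_pow]
      have e1 : ∀ k, k ∈ Finset.range (n+2) →
          Polynomial.derivative (Polynomial.C (((n+1).choose k : ℚ) * aQ k) *
              (X + Polynomial.C (c + ((n+1-k : ℕ) : ℚ)))^(n+1-k))
          = Polynomial.C (((n+1).choose k : ℚ) * aQ k) *
              (Polynomial.C ((n+1-k : ℕ) : ℚ) * (X + Polynomial.C (c + ((n+1-k : ℕ) : ℚ)))^(n+1-k-1)) := by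
        intro k hk
        rw [Polynomial.derivative_C_mul, Polynomial.derivative_X_add_C_pow]
      rw [Finset.sum_congr rfl e1, Finset.sum_range_succ]
      have e2 : ∀ k, k ∈ Finset.range (n+1) →
          Polynomial.C (((n+1).choose k : ℚ) * aQ k) *
              (Polynomial.C ((n+1-k : ℕ) : ℚ) * (X + Polynomial.C (c + ((n+1-k : ℕ) : ℚ)))^(n+1-k-1))
          = Polynomial.C (((n+1):ℚ)) *
              (Polynomial.C ((n.choose k : ℚ) * aQ k) * (X + Polynomial.C ((c+1) + ((n-k : ℕ) : ℚ)))^(n-k)) := by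
        intro k hk
        have hkn : k ≤ n := Nat.lt_succ_iff.mp (Finset.mem_range.mp hk)
        have h3 : n + 1 - k - 1 = n - k := by omega
        have h4 : c + ((n+1-k : ℕ) : ℚ) = (c+1) + ((n-k : ℕ) : ℚ) := by
          rw [Nat.cast_sub (by omega), Nat.cast_sub hkn]
          push_cast; ring
        have h5 : ((n+1).choose k : ℚ) * ((n+1-k : ℕ) : ℚ) = ((n+1):ℚ) * (n.choose k : ℚ) := by
          have := Nat.choose_mul_succ_eq n k
          have h6 : ((n.choose k * (n+1) : ℕ) : ℚ) = (((n+1).choose k * (n+1-k) : ℕ) : ℚ) := by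
            exact_mod_cast congrArg (fun z : ℕ => (z:ℚ)) this
          push_cast at h6
          linarith
        have h9 : ((n+1).choose k : ℚ) * aQ k * ((n+1-k : ℕ) : ℚ)
            = ((n+1):ℚ) * ((n.choose k : ℚ) * aQ k) := by
          rw [mul_right_comm, h5]; ring
        rw [h3, h4, ← mul_assoc, ← Polynomial.C_mul, h9, Polynomial.C_mul, mul_assoc]
      rw [Finset.sum_congr rfl e2, ← Finset.mul_sum, ih (c+1)]
      have h7 : (c+1) + ((n+1 : ℕ) : ℚ) = c + ((n+2 : ℕ) : ℚ) := by push_cast; ring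
      rw [h7]
      have hz : Polynomial.C (((n+1).choose (n+1) : ℚ) * aQ (n+1)) *
          (Polynomial.C ((n+1-(n+1) : ℕ) : ℚ) *
            (X + Polynomial.C (c + ((n+1-(n+1) : ℕ) : ℚ)))^(n+1-(n+1)-1)) = 0 := by
        simp
      rw [hz, add_zero, Nat.add_sub_cancel]
      push_cast
      ring
    · -- evaluations at -(c+n+2) agree
      rw [Polynomial.eval_finset_sum, Polynomial.eval_pow, Polynomial.eval_add,
        Polynomial.eval_X, Polynomial.eval_C]
      have e8 : ∀ k, k ∈ Finset.range (n+2) →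
          Polynomial.eval (-(c + (n+2)))
            (Polynomial.C (((n+1).choose k : ℚ) * aQ k) * (X + Polynomial.C (c + ((n+1-k : ℕ) : ℚ)))^(n+1-k))
          = (-1:ℚ)^(n+1-k) * (((n+1).choose k : ℚ)) * ((k:ℚ)+1)^n := by
        intro k hk
        have hkk : k ≤ n + 1 := Nat.lt_succ_iff.mp (Finset.mem_range.mp hk)
        rw [Polynomial.eval_mul, Polynomial.eval_pow, Polynomial.eval_add, Polynomial.eval_X,
          Polynomial.eval_C, Polynomial.eval_C]
        have hb : -(c + ((n:ℚ)+2)) + (c + ((n+1-k : ℕ) : ℚ)) = -(((k:ℚ))+1) := by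
          rw [Nat.cast_sub hkk]; push_cast; ring
        rw [hb, neg_pow]
        rw [show (((n+1).choose k : ℚ) * aQ k) * ((-1:ℚ)^(n+1-k) * ((k:ℚ)+1)^(n+1-k))
            = (-1:ℚ)^(n+1-k) * ((n+1).choose k : ℚ) * (aQ k * ((k:ℚ)+1)^(n+1-k)) by ring]
        rw [aQ_mul_pow n k hkk]
      rw [Finset.sum_congr rfl e8]
      have e9 : -(c + ((n:ℚ)+2)) + (c + ((n+1+1 : ℕ) : ℚ)) = 0 := by push_cast; ring
      rw [e9, zero_pow (Nat.succ_ne_zero n)]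
      have := findiff (n+1) ((X + Polynomial.C 1)^n) (by
        rw [Polynomial.natDegree_pow, Polynomial.natDegree_X_add_C, mul_one]; omega)
      calc ∑ k ∈ Finset.range (n+2), (-1:ℚ)^(n+1-k) * (((n+1).choose k : ℚ)) * ((k:ℚ)+1)^n
          = ∑ k ∈ Finset.range (n+1+1), (-1:ℚ)^(n+1-k) * (((n+1).choose k : ℚ)) *
              Polynomial.eval (k:ℚ) ((X + Polynomial.C 1)^n) := by
            refine Finset.sum_congr rfl fun k hk => ?_
            rw [Polynomial.eval_pow, Polynomial.eval_add, Polynomial.eval_X, Polynomial.eval_C]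
        _ = 0 := this

lemma abel_eval (n : ℕ) :
    ∑ k ∈ Finset.range (n+1), (n.choose k : ℚ) * aQ k * (((n-k : ℕ) : ℚ)+1)^(n-k)
      = ((n:ℚ)+2)^n := by
  have h := congrArg (Polynomial.eval (0:ℚ)) (abel_key n 1)
  simp only [Polynomial.eval_finset_sum, Polynomial.eval_mul, Polynomial.eval_pow,
    Polynomial.eval_add, Polynomial.eval_X, Polynomial.eval_C, zero_add] at h
  calc ∑ k ∈ Finset.range (n+1), (n.choose k : ℚ) * aQ k * (((n-k : ℕ) : ℚ)+1)^(n-k)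
      = ∑ k ∈ Finset.range (n+1), (n.choose k : ℚ) * aQ k * (1 + ((n-k : ℕ) : ℚ))^(n-k) := by
        refine Finset.sum_congr rfl fun k hk => by rw [add_comm ((n-k : ℕ) : ℚ) 1]
    _ = (1 + ((n+1 : ℕ) : ℚ))^n := h
    _ = ((n:ℚ)+2)^n := by push_cast; ring

lemma apow (m : ℕ) : ((m:ℚ)+1)^m = ((m:ℚ)+1) * aQ m := by
  have ha : aQ m = ((m:ℚ)+1)^(m-1) := by rw [aQ]; push_cast [Nat.cast_pow]; ring_nf
  rcases Nat.eq_zero_or_pos m with rfl | hm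
  · simp [aQ]
  · have hp : ((m:ℚ)+1)^m = ((m:ℚ)+1)^(m-1) * ((m:ℚ)+1) := by
      rw [← pow_succ]
      congr 1
      omega
    rw [ha, hp]
    ring

lemma central (n : ℕ) :
    ((n:ℚ)+2) * ∑ k ∈ Finset.range (n+1), (n.choose k : ℚ) * aQ k * aQ (n-k)
      = 2 * ((n:ℚ)+2)^n := by
  have hB : ∑ k ∈ Finset.range (n+1),
      (n.choose k : ℚ) * aQ k * aQ (n-k) * (((n-k : ℕ) : ℚ)+1) = ((n:ℚ)+2)^n := by
    rw [← abel_eval n]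
    refine Finset.sum_congr rfl fun k hk => ?_
    rw [apow (n-k)]
    ring
  have hB' : ∑ k ∈ Finset.range (n+1),
      (n.choose k : ℚ) * aQ k * aQ (n-k) * ((k : ℚ)+1) = ((n:ℚ)+2)^n := by
    rw [← hB,
      ← Finset.sum_range_reflect (fun k => (n.choose k : ℚ) * aQ k * aQ (n-k) * ((k : ℚ)+1)) (n+1)]
    refine Finset.sum_congr rfl fun j hj => ?_
    have hj' : j ≤ n := Nat.lt_succ_iff.mp (Finset.mem_range.mp hj)
    simp only [Nat.add_sub_cancel]
    rw [Nat.choose_symm hj', Nat.sub_sub_self hj']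
    ring
  have hsum : ∑ k ∈ Finset.range (n+1),
      ((n.choose k : ℚ) * aQ k * aQ (n-k) * (((n-k : ℕ) : ℚ)+1)
        + (n.choose k : ℚ) * aQ k * aQ (n-k) * ((k : ℚ)+1)) = 2 * ((n:ℚ)+2)^n := by
    rw [Finset.sum_add_distrib, hB, hB']; ring
  rw [Finset.mul_sum, ← hsum]
  refine Finset.sum_congr rfl fun k hk => ?_
  have hk' : k ≤ n := Nat.lt_succ_iff.mp (Finset.mem_range.mp hk)
  rw [Nat.cast_sub hk']
  ring

lemma zaQ (m : ℕ) : ((m:ℚ)+1)^((m:ℤ)-1) = aQ m := by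
  rcases Nat.eq_zero_or_pos m with rfl | hm
  · simp [aQ]
  · rw [show (m:ℤ)-1 = ((m-1 : ℕ) : ℤ) from by rw [Nat.cast_sub hm]; push_cast; ring]
    rw [zpow_natCast]
    rw [aQ]; push_cast [Nat.cast_pow]; ring_nf

theorem deligne_recursion_type_A (μ : ℕ) (hμ : 0 < μ) :
    ((μ : ℚ) + 1) ^ (μ - 1) =
      (((μ : ℚ) + 1) / 2) * ∑ v ∈ Finset.Icc 1 μ,
        (Nat.choose (μ - 1) (v - 1) : ℚ) * (v : ℚ) ^ ((v : ℤ) - 2) *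
          ((μ : ℚ) - v + 1) ^ ((μ : ℤ) - v - 1) := by
  obtain ⟨n, rfl⟩ : ∃ n, μ = n + 1 := ⟨μ-1, by omega⟩
  rw [← Finset.Ico_add_one_right_eq_Icc, Finset.sum_Ico_eq_sum_range]
  simp only [Nat.succ_sub_one, Nat.add_sub_cancel, Nat.add_sub_cancel_left]
  have key : ∀ i ∈ Finset.range (n+1),
      (Nat.choose n i : ℚ) * ((1+i : ℕ) : ℚ) ^ (((1+i : ℕ) : ℤ) - 2) *
        (((n+1 : ℕ) : ℚ) - ((1+i : ℕ) : ℚ) + 1) ^ (((n+1 : ℕ) : ℤ) - ((1+i : ℕ) : ℤ) - 1)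
      = (n.choose i : ℚ) * aQ i * aQ (n-i) := by
    intro i hi
    have hi' : i ≤ n := Nat.lt_succ_iff.mp (Finset.mem_range.mp hi)
    have e1 : ((1+i : ℕ) : ℚ) ^ (((1+i : ℕ) : ℤ) - 2) = aQ i := by
      rw [show ((1+i : ℕ) : ℚ) = (i:ℚ)+1 from by push_cast; ring,
        show ((1+i : ℕ) : ℤ) - 2 = (i:ℤ)-1 from by push_cast; ring, zaQ]
    have e2 : (((n+1 : ℕ) : ℚ) - ((1+i : ℕ) : ℚ) + 1) ^ (((n+1 : ℕ) : ℤ) - ((1+i : ℕ) : ℤ) - 1)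
        = aQ (n-i) := by
      rw [show ((n+1 : ℕ) : ℚ) - ((1+i : ℕ) : ℚ) + 1 = ((n-i : ℕ) : ℚ)+1 from by
          rw [Nat.cast_sub hi']; push_cast; ring,
        show ((n+1 : ℕ) : ℤ) - ((1+i : ℕ) : ℤ) - 1 = ((n-i : ℕ) : ℤ)-1 from by
          rw [Nat.cast_sub hi']; push_cast; ring, zaQ]
    rw [e1, e2]
  rw [Finset.sum_congr rfl key]
  have hc := central n
  push_cast
  rw [div_mul_eq_mul_div, eq_div_iff (two_ne_zero)]
  linear_combination - hc
end
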